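/- If I is a squarefree stable monomial ideal of S = K[x_1,...,x_n] and β_{k,k+ℓ}(I) is an extremal Betti number of I, then 1 ≤ β_{k,k+ℓ}(I) ≤ C(k+ℓ-1, ℓ-1), the binomial coefficient counting squarefree monomials of degree ℓ with m(u) = k+ℓ. -/

import Mathlib

open scoped Classical

noncomputable section

/-- The squarefree monomial `∏_{i ∈ A} x_i` of `S = K[x_1,…,x_n]`,
encoded by its support `A ⊆ {1,…,n}`. -/
def sqMon (K : Type*) [Field K] {n : ℕ} (A : Finset (Fin n)) : MvPolynomial (Fin n) K :=
  ∏ i ∈ A, MvPolynomial.X i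

/-- `[x_1,…,x_n]^d`: the ideal generated by all squarefree monomials of degree `d`. -/
def sqPow (K : Type*) [Field K] (n d : ℕ) : Ideal (MvPolynomial (Fin n) K) :=
  Ideal.span {p | ∃ A : Finset (Fin n), A.card = d ∧ p = sqMon K A}

/-- `I` is a squarefree monomial ideal: generated by squarefree monomials. -/
def IsSqMonIdeal (K : Type*) [Field K] {n : ℕ} (I : Ideal (MvPolynomial (Fin n) K)) : Prop :=
  ∃ G : Set (Finset (Fin n)), I = Ideal.span (sqMon K '' G)

/-- `A` encodes a minimal monomial generator of the squarefree monomial ideal `I`. -/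
def IsMinGen (K : Type*) [Field K] {n : ℕ} (I : Ideal (MvPolynomial (Fin n) K))
    (A : Finset (Fin n)) : Prop :=
  sqMon K A ∈ I ∧ ∀ B : Finset (Fin n), B ⊂ A → sqMon K B ∉ I

/-- `m(u)` : the largest index (1-based) occurring in the squarefree monomial with support `A`. -/
def mIdx {n : ℕ} (A : Finset (Fin n)) : ℕ := A.sup (fun i => i.1 + 1)

/-- Squarefree stable ideal: for every minimal generator `u`,
`x_j u / x_{m(u)} ∈ I` for all `j < m(u)`, `j ∉ supp u`. -/
def IsSqStableIdeal (K : Type*) [Field K] {n : ℕ} (I : Ideal (MvPolynomial (Fin n) K)) : Prop :=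
  IsSqMonIdeal K I ∧ ∀ A : Finset (Fin n), IsMinGen K I A →
    ∀ (hA : A.Nonempty) (j : Fin n), j ∉ A → j < A.max' hA →
      sqMon K (insert j (A.erase (A.max' hA))) ∈ I

/-- Squarefree strongly stable ideal: for every minimal generator `u`,
`x_j u / x_i ∈ I` for all `i ∈ supp u` and `j < i`, `j ∉ supp u`. -/
def IsSqStronglyStableIdeal (K : Type*) [Field K] {n : ℕ}
    (I : Ideal (MvPolynomial (Fin n) K)) : Prop :=
  IsSqMonIdeal K I ∧ ∀ A : Finset (Fin n), IsMinGen K I A →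
    ∀ i ∈ A, ∀ j : Fin n, j ∉ A → j < i → sqMon K (insert j (A.erase i)) ∈ I

/-- The squarefree lexicographic order (on supports of equal-degree squarefree monomials):
`A >_slex B` iff at the first index where they differ, `A` has the smaller index. -/
def slexGT {n : ℕ} (A B : Finset (Fin n)) : Prop :=
  ∃ h : (symmDiff A B).Nonempty, (symmDiff A B).min' h ∈ A

/-- Squarefree lexsegment ideal. -/
def IsSqLexIdeal (K : Type*) [Field K] {n : ℕ} (I : Ideal (MvPolynomial (Fin n) K)) : Prop :=
  IsSqMonIdeal K I ∧ ∀ A B : Finset (Fin n), A.card = B.card →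
    sqMon K A ∈ I → slexGT B A → sqMon K B ∈ I

/-- `indeg I`: the least degree of a (squarefree) monomial in `I`. -/
def indeg (K : Type*) [Field K] {n : ℕ} (I : Ideal (MvPolynomial (Fin n) K)) : ℕ :=
  sInf {d : ℕ | ∃ A : Finset (Fin n), A.card = d ∧ sqMon K A ∈ I}

/-- `G(I)_d`: the minimal generators of `I` in degree `d`, as a finset of supports. -/
def mgens (K : Type*) [Field K] {n : ℕ} (I : Ideal (MvPolynomial (Fin n) K)) (d : ℕ) :
    Finset (Finset (Fin n)) :=
  Finset.univ.filter (fun A => IsMinGen K I A ∧ A.card = d)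

/-- Graded Betti numbers `β_{k,k+j}(M)` of `M = ⊕ I_i e_i` (deg `e_i = f i`),
via the Aramova–Herzog–Hibi formula. -/
def betti (K : Type*) [Field K] {n r : ℕ} (I : Fin r → Ideal (MvPolynomial (Fin n) K))
    (f : Fin r → ℕ) (k j : ℕ) : ℕ :=
  ∑ i : Fin r, ∑ A ∈ mgens K (I i) (j - f i), Nat.choose (mIdx A - A.card) k

/-- Graded Betti numbers `β_{k,k+j}(I)` of a squarefree stable ideal (AHH formula). -/
def bettiI (K : Type*) [Field K] {n : ℕ} (I : Ideal (MvPolynomial (Fin n) K)) (k j : ℕ) : ℕ :=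
  ∑ A ∈ mgens K I j, Nat.choose (mIdx A - A.card) k

/-- `β k ℓ` (standing for `β_{k,k+ℓ}`) is an extremal Betti number. -/
def IsExtremal (β : ℕ → ℕ → ℕ) (k ℓ : ℕ) : Prop :=
  β k ℓ ≠ 0 ∧ ∀ i j : ℕ, k ≤ i → ℓ ≤ j → (i, j) ≠ (k, ℓ) → β i j = 0

/-- Squarefree stable submodule `M = ⊕ I_i e_i ⊊ F` (characterization):
each `I_i` a proper squarefree stable ideal, and
`[x_1,…,x_n]^{f_{i+1}-f_i} I_{i+1} ⊆ I_i`. -/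
def IsSqStableSubmodule (K : Type*) [Field K] {n r : ℕ}
    (I : Fin r → Ideal (MvPolynomial (Fin n) K)) (f : Fin r → ℕ) : Prop :=
  (∀ i, I i ≠ ⊤ ∧ IsSqStableIdeal K (I i)) ∧
  ∀ i : Fin r, ∀ h : i.1 + 1 < r,
    sqPow K n (f ⟨i.1 + 1, h⟩ - f i) * I ⟨i.1 + 1, h⟩ ≤ I i

/-- Squarefree lexicographic submodule (characterization of Proposition `lex`):
each `I_i` a proper squarefree lexsegment ideal, and
`[x_1,…,x_n]^{indeg I_{i+1} + f_{i+1} - f_i} ⊆ I_i`. -/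
def IsSqLexSubmodule (K : Type*) [Field K] {n r : ℕ}
    (I : Fin r → Ideal (MvPolynomial (Fin n) K)) (f : Fin r → ℕ) : Prop :=
  (∀ i, IsSqLexIdeal K (I i) ∧ I i ≠ ⊤) ∧
  ∀ i : Fin r, ∀ h : i.1 + 1 < r,
    sqPow K n (indeg K (I ⟨i.1 + 1, h⟩) + f ⟨i.1 + 1, h⟩ - f i) ≤ I i

end


/-!
Extremality at `(k, ℓ)` gives `β_{k+1,k+1+ℓ}(I) = 0`, so by the Aramova–Herzog–Hibi formula every
minimal generator `u` of degree `ℓ` has `m(u) - ℓ ≤ k`. Hence `β_{k,k+ℓ}(I)` counts exactly the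
generators of degree `ℓ` with `m(u) = k + ℓ`, and such a `u` is `x_{k+ℓ}` times a squarefree
monomial of degree `ℓ - 1` in `x_1, …, x_{k+ℓ-1}`.
-/

open Finset

section mIdx

variable {n : ℕ} {A : Finset (Fin n)}

lemma val_lt_mIdx {i : Fin n} (hi : i ∈ A) : i.1 < mIdx A :=
  Finset.le_sup (f := fun i : Fin n => i.1 + 1) hi

lemma exists_val_add_one_eq_mIdx (hA : A.Nonempty) : ∃ i ∈ A, i.1 + 1 = mIdx A :=
  let ⟨i, hi, h⟩ := A.exists_mem_eq_sup hA (fun i : Fin n => i.1 + 1)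
  ⟨i, hi, h.symm⟩

lemma card_le_mIdx (A : Finset (Fin n)) : A.card ≤ mIdx A := by
  have hsub : A.map Fin.valEmbedding ⊆ range (mIdx A) := by
    intro a ha
    obtain ⟨i, hi, rfl⟩ := mem_map.mp ha
    exact mem_range.mpr (val_lt_mIdx hi)
  simpa using card_le_card hsub

end mIdx

/-- For `ℓ ≥ 1`, deleting the top index `m - 1` is injective on these supports. For `ℓ = 0` the
truncated `ℓ - 1 = 0` makes the bound `1`, which accounts for the empty support. -/
lemma card_filter_card_eq_mIdx_eq_le (n ℓ m : ℕ) :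
    (univ.filter fun A : Finset (Fin n) => A.card = ℓ ∧ mIdx A = m).card ≤
      (m - 1).choose (ℓ - 1) := by
  set T := univ.filter fun A : Finset (Fin n) => A.card = ℓ ∧ mIdx A = m
  have mem_T {A : Finset (Fin n)} : A ∈ T ↔ A.card = ℓ ∧ mIdx A = m := by simp [T]
  rcases Nat.eq_zero_or_pos ℓ with rfl | hℓ
  · refine (card_le_one.mpr fun A hA B hB => ?_).trans (by simp)
    rw [card_eq_zero.mp (mem_T.mp hA).1, card_eq_zero.mp (mem_T.mp hB).1]
  have htop : ∀ A ∈ T, m - 1 ∈ A.map Fin.valEmbedding := by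
    intro A hA
    obtain ⟨hcard, hm⟩ := mem_T.mp hA
    obtain ⟨i, hi, hi_top⟩ := exists_val_add_one_eq_mIdx (card_pos.mp (hcard ▸ hℓ))
    exact mem_map.mpr ⟨i, hi, by simp only [Fin.valEmbedding_apply]; omega⟩
  let f : Finset (Fin n) → Finset ℕ := fun A => (A.map Fin.valEmbedding).erase (m - 1)
  have hmaps : ∀ A ∈ T, f A ∈ (range (m - 1)).powersetCard (ℓ - 1) := by
    intro A hA
    refine mem_powersetCard.mpr ⟨fun a ha => ?_, ?_⟩
    · obtain ⟨hne, hmem⟩ := mem_erase.mp ha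
      obtain ⟨i, hi, rfl⟩ := mem_map.mp hmem
      have := (mem_T.mp hA).2 ▸ val_lt_mIdx hi
      simp only [Fin.valEmbedding_apply] at hne ⊢
      exact mem_range.mpr (by omega)
    · rw [card_erase_of_mem (htop A hA), card_map, (mem_T.mp hA).1]
  have hinj : Set.InjOn f T := by
    intro A hA B hB hAB
    apply map_injective Fin.valEmbedding
    rw [← insert_erase (htop A hA), ← insert_erase (htop B hB)]
    exact congrArg _ hAB
  calc T.card ≤ ((range (m - 1)).powersetCard (ℓ - 1)).card := card_le_card_of_injOn f hmaps hinj
    _ = (m - 1).choose (ℓ - 1) := by simp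

section bettiI

variable {K : Type*} [Field K] {n : ℕ} {I : Ideal (MvPolynomial (Fin n) K)} {k ℓ : ℕ}

lemma card_of_mem_mgens {A : Finset (Fin n)} (hA : A ∈ mgens K I ℓ) : A.card = ℓ :=
  (mem_filter.mp hA).2.2

lemma mIdx_sub_le_of_bettiI_succ_eq_zero (h : bettiI K I (k + 1) ℓ = 0)
    {A : Finset (Fin n)} (hA : A ∈ mgens K I ℓ) : mIdx A - ℓ ≤ k := by
  have hchoose := sum_eq_zero_iff.mp h A hA
  rw [card_of_mem_mgens hA, Nat.choose_eq_zero_iff] at hchoose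
  omega

lemma bettiI_eq_card_mIdx_eq_of_bettiI_succ_eq_zero (h : bettiI K I (k + 1) ℓ = 0) :
    bettiI K I k ℓ = ((mgens K I ℓ).filter fun A => mIdx A = k + ℓ).card := by
  rw [card_filter]
  refine sum_congr rfl fun A hA => ?_
  have hle := mIdx_sub_le_of_bettiI_succ_eq_zero h hA
  have hcard := card_of_mem_mgens hA
  have := card_le_mIdx A
  rw [hcard]
  split_ifs with htop
  · rw [show mIdx A - ℓ = k by omega, Nat.choose_self]
  · exact Nat.choose_eq_zero_of_lt (by omega)

lemma bettiI_le_choose_of_bettiI_succ_eq_zero (h : bettiI K I (k + 1) ℓ = 0) :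
    bettiI K I k ℓ ≤ (k + ℓ - 1).choose (ℓ - 1) := by
  rw [bettiI_eq_card_mIdx_eq_of_bettiI_succ_eq_zero h]
  refine le_trans (card_le_card fun A hA => ?_) (card_filter_card_eq_mIdx_eq_le n ℓ (k + ℓ))
  obtain ⟨hgen, htop⟩ := mem_filter.mp hA
  exact mem_filter.mpr ⟨mem_univ A, card_of_mem_mgens hgen, htop⟩

end bettiI

theorem stmt_11_general (K : Type*) [Field K] (n : ℕ) (I : Ideal (MvPolynomial (Fin n) K))
    (k ℓ : ℕ) (hext : IsExtremal (bettiI K I) k ℓ) :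
    1 ≤ bettiI K I k ℓ ∧ bettiI K I k ℓ ≤ Nat.choose (k + ℓ - 1) (ℓ - 1) :=
  ⟨Nat.one_le_iff_ne_zero.mpr hext.1,
    bettiI_le_choose_of_bettiI_succ_eq_zero (hext.2 (k + 1) ℓ k.le_succ le_rfl (by simp))⟩

/-- if `β_{k,k+ℓ}(I)` is an extremal Betti number of a squarefree stable
ideal, then `1 ≤ β_{k,k+ℓ}(I) ≤ C(k+ℓ-1, ℓ-1)`. -/
theorem stmt_11 (K : Type*) [Field K] (n : ℕ) (I : Ideal (MvPolynomial (Fin n) K))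
    (hI : IsSqStableIdeal K I) (hproper : I ≠ ⊤) (k ℓ : ℕ)
    (hext : IsExtremal (bettiI K I) k ℓ) :
    1 ≤ bettiI K I k ℓ ∧ bettiI K I k ℓ ≤ Nat.choose (k + ℓ - 1) (ℓ - 1) :=
  stmt_11_general K n I k ℓ hext
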